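/- Let ω ∈ ℝ, λ ∈ ℝ, and μ ∈ ℝ with μ² > ω². Suppose R : (r₊, ∞) → ℂ is a nontrivial C² solution of the radial ODE which decays exponentially at infinity, extends continuously to [r₊, ∞) with R(r₊) ≠ 0, and satisfies lim_{r→r₊⁺} Δ(r)·R'(r) = i·(a·m − 2·M·r₊·ω)·R(r₊). Then a·m − 2·M·r₊·ω = 0. -/

import Mathlib

open Real Set MeasureTheory Filter Topology ComplexConjugate

/-- The larger root `r₊ = M + √(M² − a²)`. -/
noncomputable def rPlus (M a : ℝ) : ℝ := M + Real.sqrt (M ^ 2 - a ^ 2)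

/-- The smaller root `r₋ = M − √(M² − a²)`. -/
noncomputable def rMinus (M a : ℝ) : ℝ := M - Real.sqrt (M ^ 2 - a ^ 2)

/-- `Δ(r) = (r − r₊)(r − r₋)`. -/
noncomputable def Delta (M a r : ℝ) : ℝ := (r - rPlus M a) * (r - rMinus M a)

/-- The radial potential with real parameters `ω, λ, μ`. -/
noncomputable def Vpot (M a : ℝ) (m : ℤ) (ω lam μ r : ℝ) : ℝ :=
  -(r ^ 2 + a ^ 2) ^ 2 * ω ^ 2 + 4 * M * a * m * r * ω - a ^ 2 * m ^ 2
    + Delta M a r * (lam + a ^ 2 * ω ^ 2 + μ ^ 2 * r ^ 2)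

/-- The radial ODE `Δ (Δ R')' − V R = 0` on `(r₊, ∞)`. -/
def RadialODE (M a : ℝ) (m : ℤ) (ω lam μ : ℝ) (R : ℝ → ℂ) : Prop :=
  ∀ r ∈ Ioi (rPlus M a),
    (Delta M a r : ℂ) * deriv (fun s => (Delta M a s : ℂ) * deriv R s) r
      - (Vpot M a m ω lam μ r : ℂ) * R r = 0

/-- Exponential decay at infinity of `h` together with its derivative. -/
def ExpDecay (rp : ℝ) (h : ℝ → ℂ) : Prop :=
  ∃ C c : ℝ, 0 < C ∧ 0 < c ∧ ∀ r : ℝ, rp + 1 ≤ r →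
    ‖h r‖ + ‖deriv h r‖ ≤ C * Real.exp (-c * r)

/-!
The current `Im (Δ R' R̄)` of a solution is conserved, because `Δ` and `V` are real. Exponential
decay makes it vanish at infinity, while the boundary condition at the horizon makes it tend to
`(a m − 2 M r₊ ω) |R(r₊)|²` there.
-/

lemma rMinus_le_rPlus (M a : ℝ) : rMinus M a ≤ rPlus M a := by
  have := Real.sqrt_nonneg (M ^ 2 - a ^ 2)
  simp only [rMinus, rPlus]
  linarith

lemma Delta_nonneg {M a r : ℝ} (hr : rPlus M a ≤ r) : 0 ≤ Delta M a r :=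
  mul_nonneg (sub_nonneg.2 hr) (sub_nonneg.2 ((rMinus_le_rPlus M a).trans hr))

lemma Delta_pos {M a r : ℝ} (hr : rPlus M a < r) : 0 < Delta M a r :=
  mul_pos (sub_pos.2 hr) (sub_pos.2 ((rMinus_le_rPlus M a).trans_lt hr))

lemma differentiable_Delta (M a : ℝ) : Differentiable ℝ (Delta M a) := by
  unfold Delta
  fun_prop

lemma tendsto_sub_mul_exp_neg_mul_atTop (b : ℝ) {c : ℝ} (hc : 0 < c) :
    Tendsto (fun r => (r - b) * exp (-c * r)) atTop (𝓝 0) := by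
  have hlin : Tendsto (fun r => r * exp (-c * r)) atTop (𝓝 0) := by
    simpa using tendsto_rpow_mul_exp_neg_mul_atTop_nhds_zero 1 c hc
  have hexp : Tendsto (fun r => exp (-c * r)) atTop (𝓝 0) := by
    simpa using tendsto_rpow_mul_exp_neg_mul_atTop_nhds_zero 0 c hc
  simpa [sub_mul] using hlin.sub (hexp.const_mul b)

theorem hasDerivAt_im_mul_deriv_mul_conj {p : ℝ → ℝ} {R : ℝ → ℂ} {r v : ℝ} (hp : p r ≠ 0)
    (hR : DifferentiableAt ℝ R r)
    (hpR' : DifferentiableAt ℝ (fun s => (p s : ℂ) * deriv R s) r)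
    (hode : (p r : ℂ) * deriv (fun s => (p s : ℂ) * deriv R s) r = v * R r) :
    HasDerivAt (fun s => ((p s : ℂ) * deriv R s * conj (R s)).im) 0 r := by
  set A' := deriv (fun s => (p s : ℂ) * deriv R s) r
  have hconj : HasDerivAt (fun s => conj (R s)) (conj (deriv R r)) r := by
    simpa only [starRingEnd_apply] using hR.hasDerivAt.star
  have hreal : (p r : ℂ) * (A' * conj (R r) + (p r : ℂ) * deriv R r * conj (deriv R r))
      = ((v * Complex.normSq (R r) + p r ^ 2 * Complex.normSq (deriv R r) : ℝ) : ℂ) := by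
    rw [Complex.ofReal_add, Complex.ofReal_mul, Complex.ofReal_mul, Complex.normSq_eq_conj_mul_self,
      Complex.normSq_eq_conj_mul_self]
    push_cast
    linear_combination conj (R r) * hode
  have him := congrArg Complex.im hreal
  rw [Complex.ofReal_im, Complex.im_ofReal_mul] at him
  have hderiv : HasDerivAt (fun s => ((p s : ℂ) * deriv R s * conj (R s)).im)
      (A' * conj (R r) + (p r : ℂ) * deriv R r * conj (deriv R r)).im r :=
    Complex.imCLM.hasFDerivAt.comp_hasDerivAt r (hpR'.hasDerivAt.mul hconj)
  rwa [(mul_eq_zero.1 him).resolve_left hp] at hderiv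

theorem RadialODE.hasDerivAt_im_mul_deriv_mul_conj {M a : ℝ} {m : ℤ} {ω lam μ : ℝ} {R : ℝ → ℂ}
    (hODE : RadialODE M a m ω lam μ R) (hC2 : ContDiffOn ℝ 2 R (Ioi (rPlus M a)))
    {r : ℝ} (hr : r ∈ Ioi (rPlus M a)) :
    HasDerivAt (fun s => ((Delta M a s : ℂ) * deriv R s * conj (R s)).im) 0 r := by
  have hnhds : Ioi (rPlus M a) ∈ 𝓝 r := isOpen_Ioi.mem_nhds hr
  have hR' : DifferentiableAt ℝ (deriv R) r :=
    ((hC2.deriv_of_isOpen isOpen_Ioi (by norm_num)).differentiableOn one_ne_zero).differentiableAt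
      hnhds
  refine _root_.hasDerivAt_im_mul_deriv_mul_conj (Delta_pos hr).ne'
    ((hC2.differentiableOn two_ne_zero).differentiableAt hnhds) ?_ (sub_eq_zero.1 (hODE r hr))
  exact (Complex.ofRealCLM.differentiableAt.comp r (differentiable_Delta M a r)).mul hR'

theorem ExpDecay.tendsto_Delta_mul_deriv_mul_conj {M a : ℝ} {R : ℝ → ℂ}
    (hdecay : ExpDecay (rPlus M a) R) :
    Tendsto (fun r => (Delta M a r : ℂ) * deriv R r * conj (R r)) atTop (𝓝 0) := by
  obtain ⟨C, c, hC, hc, hbound⟩ := hdecay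
  have hlim : Tendsto (fun r => ((r - rPlus M a) * exp (-c * r) * C)
      * ((r - rMinus M a) * exp (-c * r) * C)) atTop (𝓝 0) := by
    simpa using ((tendsto_sub_mul_exp_neg_mul_atTop (rPlus M a) hc).mul_const C).mul
      ((tendsto_sub_mul_exp_neg_mul_atTop (rMinus M a) hc).mul_const C)
  refine squeeze_zero_norm' ?_ hlim
  filter_upwards [eventually_ge_atTop (rPlus M a + 1)] with r hr
  have hb := hbound r hr
  have hΔ : 0 ≤ Delta M a r := Delta_nonneg (by linarith)
  calc ‖(Delta M a r : ℂ) * deriv R r * conj (R r)‖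
      = Delta M a r * ‖deriv R r‖ * ‖R r‖ := by
        rw [norm_mul, norm_mul, Complex.norm_real, Real.norm_of_nonneg hΔ, Complex.norm_conj]
    _ ≤ Delta M a r * (C * exp (-c * r)) * (C * exp (-c * r)) := by
        have hCe : 0 ≤ C * exp (-c * r) := by positivity
        exact mul_le_mul (mul_le_mul_of_nonneg_left (by linarith [norm_nonneg (R r)]) hΔ)
          (by linarith [norm_nonneg (deriv R r)]) (norm_nonneg _) (mul_nonneg hΔ hCe)
    _ = _ := by unfold Delta; ring

theorem eq_of_tendsto_of_hasDerivAt_zero_Ioi {f : ℝ → ℝ} {x l₁ l₂ : ℝ}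
    (hf : ∀ y ∈ Ioi x, HasDerivAt f 0 y)
    (h₁ : Tendsto f (𝓝[>] x) (𝓝 l₁)) (h₂ : Tendsto f atTop (𝓝 l₂)) : l₁ = l₂ := by
  obtain ⟨k, hk⟩ := isOpen_Ioi.exists_is_const_of_deriv_eq_zero isPreconnected_Ioi
    (fun y hy => (hf y hy).differentiableAt.differentiableWithinAt) (fun y hy => (hf y hy).deriv)
  have hk₁ : Tendsto f (𝓝[>] x) (𝓝 k) :=
    tendsto_const_nhds.congr' (eventually_nhdsWithin_of_forall fun y hy => (hk y hy).symm)
  have hk₂ : Tendsto f atTop (𝓝 k) :=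
    tendsto_const_nhds.congr' ((eventually_gt_atTop x).mono fun y hy => (hk y hy).symm)
  rw [tendsto_nhds_unique h₁ hk₁, tendsto_nhds_unique h₂ hk₂]

theorem stmt0_general (M a : ℝ) (m : ℤ)
    (ω lam μ : ℝ)
    (R : ℝ → ℂ)
    (hC2 : ContDiffOn ℝ 2 R (Ioi (rPlus M a)))
    (hODE : RadialODE M a m ω lam μ R)
    (hdecay : ExpDecay (rPlus M a) R)
    (hcont : ContinuousOn R (Ici (rPlus M a)))
    (hR0 : R (rPlus M a) ≠ 0)
    (hflux : Tendsto (fun r => (Delta M a r : ℂ) * deriv R r)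
      (𝓝[>] (rPlus M a))
      (𝓝 (Complex.I * ((a * m - 2 * M * rPlus M a * ω : ℝ) : ℂ) * R (rPlus M a)))) :
    a * m - 2 * M * rPlus M a * ω = 0 := by
  set k := a * m - 2 * M * rPlus M a * ω
  have hRlim : Tendsto R (𝓝[>] (rPlus M a)) (𝓝 (R (rPlus M a))) :=
    (hcont _ self_mem_Ici).mono_left (nhdsWithin_mono _ Ioi_subset_Ici_self)
  have hhorizon := (Complex.continuous_im.tendsto _).comp
    (hflux.mul ((Complex.continuous_conj.tendsto _).comp hRlim))
  have hinfinity := (Complex.continuous_im.tendsto _).comp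
    hdecay.tendsto_Delta_mul_deriv_mul_conj
  have hcurrent : (Complex.I * (k : ℂ) * R (rPlus M a) * conj (R (rPlus M a))).im = 0 :=
    eq_of_tendsto_of_hasDerivAt_zero_Ioi
      (fun r hr => hODE.hasDerivAt_im_mul_deriv_mul_conj hC2 hr) hhorizon hinfinity
  rw [mul_assoc, Complex.mul_conj] at hcurrent
  simpa [hR0] using hcurrent

/-- a finite-energy real mode solution with `μ² > ω²` must satisfy
`a m − 2 M r₊ ω = 0`. -/
theorem stmt0 (M a : ℝ) (hM : 0 < M) (ha : |a| < M) (m : ℤ)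
    (ω lam μ : ℝ) (hμ : ω ^ 2 < μ ^ 2)
    (R : ℝ → ℂ)
    (hC2 : ContDiffOn ℝ 2 R (Ioi (rPlus M a)))
    (hODE : RadialODE M a m ω lam μ R)
    (hnt : ∃ r ∈ Ioi (rPlus M a), R r ≠ 0)
    (hdecay : ExpDecay (rPlus M a) R)
    (hcont : ContinuousOn R (Ici (rPlus M a)))
    (hR0 : R (rPlus M a) ≠ 0)
    (hflux : Tendsto (fun r => (Delta M a r : ℂ) * deriv R r)
      (𝓝[>] (rPlus M a))
      (𝓝 (Complex.I * ((a * m - 2 * M * rPlus M a * ω : ℝ) : ℂ) * R (rPlus M a)))) :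
    a * m - 2 * M * rPlus M a * ω = 0 :=
  stmt0_general M a m ω lam μ R hC2 hODE hdecay hcont hR0 hflux
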